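/- In an implicative aBE algebra, for all x, y: y → x = ((x → y) → y) → x. -/

import Mathlib

/-!
Write `a = (x ⮕ y) ⮕ y` and `u = a ⮕ x`; in a Boolean model `a = x ⊔ y` and `u = y ⮕ x`.
Everything rests on the absorption law `(p ⮕ q) ⮕ r ⮕ p = r ⮕ p` (exchange plus implicativity)
and its consequence `p ⮕ q = q → q ⮕ p = p`. These give `y ⮕ u = y ⮕ x` and `u ⮕ y = y`; then
`u ⮕ (y ⮕ x) = u ⮕ (y ⮕ u) = 𝟙` and `(y ⮕ x) ⮕ u = (y ⮕ u) ⮕ ((u ⮕ y) ⮕ u) = 𝟙`, and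
antisymmetry concludes.
-/

class ImplicativeABE (X : Type*) where
  imp : X → X → X
  one : X
  one_imp : ∀ x, imp one x = x
  imp_one : ∀ x, imp x one = one
  imp_self : ∀ x, imp x x = one
  exch : ∀ x y z, imp x (imp y z) = imp y (imp x z)
  antisymm : ∀ x y, imp x y = one → imp y x = one → x = y
  implicative : ∀ x y, imp (imp x y) x = x

infixr:60 " ⮕ " => ImplicativeABE.imp
notation "𝟙" => ImplicativeABE.one

namespace ImplicativeABE

variable {X : Type*} [ImplicativeABE X]

theorem imp_imp_self_eq_one (p q : X) : p ⮕ q ⮕ p = 𝟙 := by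
  rw [exch, imp_self, imp_one]

theorem imp_eq_of_imp_eq {p q : X} (h : p ⮕ q = q) : q ⮕ p = p :=
  h ▸ implicative p q

theorem imp_imp_imp_self (p q r : X) : (p ⮕ q) ⮕ r ⮕ p = r ⮕ p := by
  rw [exch, implicative]

theorem imp_imp_imp_imp_left (x y : X) : y ⮕ ((x ⮕ y) ⮕ y) ⮕ x = y ⮕ x := by
  rw [exch, imp_eq_of_imp_eq (imp_imp_imp_self y x (x ⮕ y))]

theorem imp_imp_imp_imp_right (x y : X) : (((x ⮕ y) ⮕ y) ⮕ x) ⮕ y = y := by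
  set a := (x ⮕ y) ⮕ y
  set u := a ⮕ x
  set v := u ⮕ y
  have hxv : x ⮕ v = x ⮕ y := by
    rw [exch, imp_eq_of_imp_eq (imp_imp_imp_self x y a)]
  have hxyv : (x ⮕ y) ⮕ v = a := by
    rw [exch, implicative]
  have hv_top : v ⮕ y = 𝟙 :=
    calc v ⮕ y = (x ⮕ y) ⮕ v ⮕ y := by
          refine (imp_eq_of_imp_eq ?_).symm
          rw [← hxv, exch, implicative]
      _ = v ⮕ (x ⮕ y) ⮕ v := by rw [exch, hxyv]
      _ = 𝟙 := imp_imp_self_eq_one v (x ⮕ y)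
  exact antisymm _ _ hv_top (imp_imp_self_eq_one y u)

end ImplicativeABE

open ImplicativeABE in
theorem stmt9 {X : Type*} [ImplicativeABE X] (x y : X) :
    y ⮕ x = ((x ⮕ y) ⮕ y) ⮕ x := by
  set u := ((x ⮕ y) ⮕ y) ⮕ x
  have hyu : y ⮕ u = y ⮕ x := imp_imp_imp_imp_left x y
  have huy : u ⮕ y = y := imp_imp_imp_imp_right x y
  refine antisymm _ _ ?_ ?_
  · calc (y ⮕ x) ⮕ u = (y ⮕ u) ⮕ (u ⮕ y) ⮕ u := by rw [hyu, implicative]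
      _ = 𝟙 := by rw [huy, ImplicativeABE.imp_self]
  · rw [← hyu, imp_imp_self_eq_one]
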